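/- Let d ≥ 1 and N ≥ 1 be integers, and let m, n : {1,…,d} → ℕ with ∑_{i=1}^d m_i = ∑_{i=1}^d n_i = N. Let G_1, …, G_N be independent real random variables on a probability space, each distributed according to the Gamma distribution with shape 1/N and rate 1. Set Z = ∑_{j=1}^N G_j, M_i = ∑_{k ≤ i} m_k, N_i = ∑_{k ≤ i} n_k (with M_0 = N_0 = 0), and define X_i = (∑_{j = M_{i−1}+1}^{M_i} G_j)/Z and Y_i = (∑_{j = N_{i−1}+1}^{N_i} G_j)/Z. Then for every i ∈ {1,…,d}, E[ |X_i − Y_i| ] ≤ |M_{i−1} − N_{i−1}|/N + |M_i − N_i|/N. -/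

import Mathlib

open MeasureTheory ProbabilityTheory Finset
open scoped ENNReal symmDiff

/-!
The ratios `G j / Z` are exchangeable, because `G` is i.i.d., and they sum to one almost surely,
so each has mean `1 / N`. As the `G j` are nonnegative, `|X i - Y i|` is at most the sum of the
`G j / Z` over the symmetric difference of the two blocks, and the integer intervals `[a₁, a₂)` and
`[b₁, b₂)` differ in at most `|a₁ - b₁| + |a₂ - b₂|` points.
-/

lemma ae_pos_gammaMeasure (a r : ℝ) : ∀ᵐ x ∂gammaMeasure a r, 0 < x := by
  simp only [ae_iff, not_lt]
  rw [gammaMeasure, show {x : ℝ | x ≤ 0} = Set.Iic 0 from rfl,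
    withDensity_apply _ measurableSet_Iic, setLIntegral_congr Iio_ae_eq_Iic.symm,
    lintegral_gammaPDF_of_nonpos le_rfl]

lemma lintegral_comp_perm_pi {ι β : Type*} [Fintype ι] [MeasurableSpace β] (ν : Measure β)
    [SigmaFinite ν] (σ : Equiv.Perm ι) {f : (ι → β) → ℝ≥0∞} (hf : Measurable f) :
    ∫⁻ x, f (x ∘ σ) ∂Measure.pi (fun _ => ν) = ∫⁻ x, f x ∂Measure.pi (fun _ => ν) := by
  have := (measurePreserving_piCongrLeft (fun _ : ι => ν) σ.symm).lintegral_comp hf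
  convert this using 4 with x
  funext i
  simp [MeasurableEquiv.piCongrLeft, Equiv.piCongrLeft_apply_eq_cast]

lemma sum_ofReal_div_sum_eq_one {ι : Type*} [Fintype ι] [Nonempty ι] {x : ι → ℝ}
    (hx : ∀ k, 0 < x k) : ∑ k, ENNReal.ofReal (x k / ∑ l, x l) = 1 := by
  have hsum : 0 < ∑ l, x l := sum_pos (fun k _ => hx k) univ_nonempty
  rw [← ENNReal.ofReal_sum_of_nonneg fun k _ => div_nonneg (hx k).le hsum.le, ← sum_div,
    div_self hsum.ne', ENNReal.ofReal_one]

lemma lintegral_ofReal_eval_div_sum_pi {ι : Type*} [Fintype ι] (ν : Measure ℝ)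
    [IsProbabilityMeasure ν] (hν : ∀ᵐ t ∂ν, 0 < t) (j : ι) :
    ∫⁻ x, ENNReal.ofReal (x j / ∑ k, x k) ∂Measure.pi (fun _ => ν) =
      ENNReal.ofReal (Fintype.card ι : ℝ)⁻¹ := by
  classical
  have : Nonempty ι := ⟨j⟩
  set F : ι → ℝ≥0∞ := fun k => ∫⁻ x, ENNReal.ofReal (x k / ∑ l, x l) ∂Measure.pi (fun _ => ν)
  have hmeas (k : ι) : Measurable fun x : ι → ℝ => ENNReal.ofReal (x k / ∑ l, x l) := by
    fun_prop
  have hexch : ∀ k, F k = F j := by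
    intro k
    simp only [F]
    rw [← lintegral_comp_perm_pi ν (Equiv.swap j k) (hmeas k)]
    simp only [Function.comp_apply, Equiv.swap_apply_right]
    congr! 4
    exact Equiv.sum_comp (Equiv.swap j k) _
  have hpos : ∀ᵐ x ∂Measure.pi (fun _ => ν), ∀ k : ι, 0 < x k :=
    ae_all_iff.2 fun k => (measurePreserving_eval (fun _ => ν) k).quasiMeasurePreserving.ae hν
  have htotal : ∑ k, F k = 1 := by
    rw [← lintegral_finsetSum _ fun k _ => hmeas k,
      lintegral_congr_ae (hpos.mono fun x hx => sum_ofReal_div_sum_eq_one hx),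
      lintegral_one, measure_univ]
  simp only [hexch, sum_const, card_univ, nsmul_eq_mul] at htotal
  rw [ENNReal.ofReal_inv_of_pos (by exact_mod_cast Fintype.card_pos), ENNReal.ofReal_natCast]
  exact ENNReal.eq_inv_of_mul_eq_one_left (by rwa [mul_comm])

lemma lintegral_ofReal_div_sum_of_iIndepFun {ι Ω : Type*} [Fintype ι] [MeasurableSpace Ω]
    {μ : Measure Ω} [IsProbabilityMeasure μ] {G : ι → Ω → ℝ} (hG : ∀ j, Measurable (G j))
    (hindep : iIndepFun G μ) {ν : Measure ℝ} (hdist : ∀ j, μ.map (G j) = ν)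
    (hν : ∀ᵐ t ∂ν, 0 < t) (j : ι) :
    ∫⁻ ω, ENNReal.ofReal (G j ω / ∑ k, G k ω) ∂μ = ENNReal.ofReal (Fintype.card ι : ℝ)⁻¹ := by
  have : IsProbabilityMeasure ν := hdist j ▸ Measure.isProbabilityMeasure_map (hG j).aemeasurable
  have hlaw : μ.map (fun ω k => G k ω) = Measure.pi fun _ => ν := by
    rw [hindep.map_fun_eq_pi_map fun k => (hG k).aemeasurable]
    simp only [hdist]
  rw [← lintegral_ofReal_eval_div_sum_pi ν hν j, ← hlaw,
    lintegral_map (by fun_prop) (measurable_pi_lambda _ hG)]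

lemma abs_sum_sub_sum_le_sum_symmDiff {ι : Type*} [DecidableEq ι] {g : ι → ℝ}
    (hg : ∀ i, 0 ≤ g i) (A B : Finset ι) :
    |∑ i ∈ A, g i - ∑ i ∈ B, g i| ≤ ∑ i ∈ A ∆ B, g i := by
  rw [← sum_sdiff_sub_sum_sdiff, Finset.symmDiff_def, sum_union disjoint_sdiff_sdiff]
  refine (abs_sub _ _).trans_eq ?_
  rw [abs_of_nonneg (sum_nonneg fun i _ => hg i), abs_of_nonneg (sum_nonneg fun i _ => hg i)]

lemma card_symmDiff_filter_Ico_le (N a₁ a₂ b₁ b₂ : ℕ) :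
    (#((univ.filter fun j : Fin N => a₁ ≤ j ∧ j < a₂) ∆
        (univ.filter fun j : Fin N => b₁ ≤ j ∧ j < b₂)) : ℝ) ≤
      |(a₁ : ℝ) - b₁| + |(a₂ : ℝ) - b₂| := by
  have hcast : ∀ a b : ℕ, (#(Ico (min a b) (max a b)) : ℝ) = |(a : ℝ) - b| := fun a b => by
    rw [Nat.card_Ico, Nat.cast_sub min_le_max, Nat.cast_max, Nat.cast_min, max_sub_min_eq_abs']
  rw [← hcast, ← hcast]
  -- a point of `[a₁, a₂) ∆ [b₁, b₂)` lies between the two left ends or between the two right ends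
  refine mod_cast (card_le_card_of_injOn Fin.val (fun j hj => ?_) Fin.val_injective.injOn).trans
    (card_union_le _ _)
  rw [mem_coe, mem_symmDiff] at hj
  simp at hj ⊢
  omega

theorem gamma_block_coupling_single_general {d N : ℕ}
    {Ω : Type*} [MeasurableSpace Ω] (μ : Measure Ω) [IsProbabilityMeasure μ]
    (G : Fin N → Ω → ℝ) (hGmeas : ∀ j, Measurable (G j))
    (hGindep : iIndepFun G μ)
    (hGdist : ∀ j, μ.map (G j) = gammaMeasure (1 / N) 1)
    (Z : Ω → ℝ) (hZ : ∀ ω, Z ω = ∑ j, G j ω)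
    (SM SN : ℕ → ℕ)
    (X Y : Fin d → Ω → ℝ)
    (hX : ∀ (i : Fin d) (ω : Ω), X i ω =
      (∑ j ∈ univ.filter (fun j : Fin N => SM (i : ℕ) ≤ (j : ℕ) ∧ (j : ℕ) < SM ((i : ℕ) + 1)),
        G j ω) / Z ω)
    (hY : ∀ (i : Fin d) (ω : Ω), Y i ω =
      (∑ j ∈ univ.filter (fun j : Fin N => SN (i : ℕ) ≤ (j : ℕ) ∧ (j : ℕ) < SN ((i : ℕ) + 1)),
        G j ω) / Z ω) :
    ∀ i : Fin d,
      ∫⁻ ω, ENNReal.ofReal |X i ω - Y i ω| ∂μ ≤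
        ENNReal.ofReal (|(SM (i : ℕ) : ℝ) - (SN (i : ℕ) : ℝ)| / N +
          |(SM ((i : ℕ) + 1) : ℝ) - (SN ((i : ℕ) + 1) : ℝ)| / N) := by
  intro i
  set A := univ.filter fun j : Fin N => SM i ≤ j ∧ j < SM (i + 1)
  set B := univ.filter fun j : Fin N => SN i ≤ j ∧ j < SN (i + 1)
  obtain rfl : Z = fun ω => ∑ j, G j ω := funext hZ
  have hG_nonneg : ∀ᵐ ω ∂μ, ∀ j, 0 ≤ G j ω := ae_all_iff.2 fun j =>
    (ae_of_ae_map (hGmeas j).aemeasurable ((hGdist j).symm ▸ ae_pos_gammaMeasure _ _)).mono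
      fun _ => le_of_lt
  have hpointwise : ∀ᵐ ω ∂μ, ENNReal.ofReal |X i ω - Y i ω| ≤
      ∑ j ∈ A ∆ B, ENNReal.ofReal (G j ω / ∑ k, G k ω) := by
    filter_upwards [hG_nonneg] with ω hω
    have hZ0 : 0 ≤ ∑ k, G k ω := sum_nonneg fun k _ => hω k
    rw [← ENNReal.ofReal_sum_of_nonneg fun j _ => div_nonneg (hω j) hZ0, ← sum_div, hX, hY,
      ← sub_div, abs_div, abs_of_nonneg hZ0]
    exact ENNReal.ofReal_le_ofReal
      (div_le_div_of_nonneg_right (abs_sum_sub_sum_le_sum_symmDiff hω A B) hZ0)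
  calc ∫⁻ ω, ENNReal.ofReal |X i ω - Y i ω| ∂μ
      ≤ ∫⁻ ω, ∑ j ∈ A ∆ B, ENNReal.ofReal (G j ω / ∑ k, G k ω) ∂μ := lintegral_mono_ae hpointwise
    _ = ∑ j ∈ A ∆ B, ENNReal.ofReal (N : ℝ)⁻¹ := by
      rw [lintegral_finsetSum _ fun j _ => by fun_prop]
      refine sum_congr rfl fun j _ => ?_
      rw [lintegral_ofReal_div_sum_of_iIndepFun hGmeas hGindep hGdist
        (ae_pos_gammaMeasure _ _) j, Fintype.card_fin]
    _ = ENNReal.ofReal (#(A ∆ B) / N) := by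
      rw [sum_const, nsmul_eq_mul, ← ENNReal.ofReal_natCast, ← ENNReal.ofReal_mul (by positivity),
        div_eq_mul_inv]
    _ ≤ _ := by
      rw [← add_div]
      gcongr
      exact card_symmDiff_filter_Ico_le N _ _ _ _

/-- Coupling bound for grouped sums of i.i.d. `Gamma(1/N, 1)` random
variables: with `X i` and `Y i` the normalized block sums of `G` over the blocks determined
by the partial sums `SM`, `SN` of `m` and `n`, one has
`E |X i − Y i| ≤ |SM i − SN i|/N + |SM (i+1) − SN (i+1)|/N` for every `i`. -/
theorem gamma_block_coupling_single {d N : ℕ} (hd : 1 ≤ d) (hN : 1 ≤ N)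
    (m n : Fin d → ℕ) (hm : ∑ i, m i = N) (hn : ∑ i, n i = N)
    {Ω : Type*} [MeasurableSpace Ω] (μ : Measure Ω) [IsProbabilityMeasure μ]
    (G : Fin N → Ω → ℝ) (hGmeas : ∀ j, Measurable (G j))
    (hGindep : iIndepFun G μ)
    (hGdist : ∀ j, μ.map (G j) = gammaMeasure (1 / N) 1)
    (Z : Ω → ℝ) (hZ : ∀ ω, Z ω = ∑ j, G j ω)
    (SM SN : ℕ → ℕ)
    (hSM : ∀ i : ℕ, SM i = ∑ k ∈ univ.filter (fun k : Fin d => (k : ℕ) < i), m k)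
    (hSN : ∀ i : ℕ, SN i = ∑ k ∈ univ.filter (fun k : Fin d => (k : ℕ) < i), n k)
    (X Y : Fin d → Ω → ℝ)
    (hX : ∀ (i : Fin d) (ω : Ω), X i ω =
      (∑ j ∈ univ.filter (fun j : Fin N => SM (i : ℕ) ≤ (j : ℕ) ∧ (j : ℕ) < SM ((i : ℕ) + 1)),
        G j ω) / Z ω)
    (hY : ∀ (i : Fin d) (ω : Ω), Y i ω =
      (∑ j ∈ univ.filter (fun j : Fin N => SN (i : ℕ) ≤ (j : ℕ) ∧ (j : ℕ) < SN ((i : ℕ) + 1)),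
        G j ω) / Z ω) :
    ∀ i : Fin d,
      ∫⁻ ω, ENNReal.ofReal |X i ω - Y i ω| ∂μ ≤
        ENNReal.ofReal (|(SM (i : ℕ) : ℝ) - (SN (i : ℕ) : ℝ)| / N +
          |(SM ((i : ℕ) + 1) : ℝ) - (SN ((i : ℕ) + 1) : ℝ)| / N) :=
  gamma_block_coupling_single_general μ G hGmeas hGindep hGdist Z hZ SM SN X Y hX hY
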